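/- Let k and α be real numbers with 0 < k ≤ 1 and α ≥ 1, let N ≥ 1 be a natural number, and let a_0, a_1, …, a_{N−1} be nonnegative real numbers satisfying a_{j+1} ≤ k·a_j for every j = 0, 1, …, N−2. Setting w = ((1+k)^α − 1)/k^α, one has (∑_{j=0}^{N−1} a_j)^α ≥ ∑_{j=0}^{N−1} w^{ω_H(j)} · a_j^α. -/

import Mathlib

/-!
Split the first `2 ^ (m + 1)` terms into two halves of length `2 ^ m`, with sums `x` and `y`.
Adding `2 ^ m` to an index below `2 ^ m` raises its Hamming weight by one, so by induction the
weighted sum is at most `x ^ α + w * y ^ α`, where `w = ((1 + k) ^ α - 1) / k ^ α`. The decay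
hypothesis gives `y ≤ k * x`, and because `t ↦ (t + y) ^ α - t ^ α` is nondecreasing for
`α ≥ 1`, evaluating it at `t = y / k ≤ x` yields `x ^ α + w * y ^ α ≤ (x + y) ^ α`. A general
length `N` is reduced to `2 ^ N` by extending the sequence by zeros.
-/

/-- The Hamming weight of a natural number: the number of 1's in its binary expansion. -/
def hammingWeight (j : ℕ) : ℕ := (Nat.digits 2 j).sum

open Finset Real

lemma hammingWeight_eq_mod_two_add (j : ℕ) : hammingWeight j = j % 2 + hammingWeight (j / 2) := by
  rcases Nat.eq_zero_or_pos j with rfl | hj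
  · simp [hammingWeight]
  · simp [hammingWeight, Nat.digits_def' (by norm_num : 1 < 2) hj]

lemma hammingWeight_two_pow_add {m j : ℕ} (hj : j < 2 ^ m) :
    hammingWeight (2 ^ m + j) = hammingWeight j + 1 := by
  induction m generalizing j with
  | zero =>
    obtain rfl : j = 0 := by simpa using hj
    rfl
  | succ m ih =>
    rw [hammingWeight_eq_mod_two_add, hammingWeight_eq_mod_two_add j,
      show (2 ^ (m + 1) + j) / 2 = 2 ^ m + j / 2 by omega, ih (by omega)]
    omega

lemma monotoneOn_rpow_add_sub_rpow {α y : ℝ} (hα : 1 ≤ α) (hy : 0 ≤ y) :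
    MonotoneOn (fun t : ℝ => (t + y) ^ α - t ^ α) (Set.Ici 0) := by
  have hderiv (z : ℝ) : HasDerivAt (fun t : ℝ => (t + y) ^ α - t ^ α)
      (α * (z + y) ^ (α - 1) * 1 - α * z ^ (α - 1)) z :=
    ((hasDerivAt_rpow_const (Or.inr hα)).comp z ((hasDerivAt_id z).add_const y)).sub
      (hasDerivAt_rpow_const (Or.inr hα))
  have hdiff : Differentiable ℝ (fun t : ℝ => (t + y) ^ α - t ^ α) :=
    fun z => (hderiv z).differentiableAt
  refine monotoneOn_of_deriv_nonneg (convex_Ici 0) hdiff.continuous.continuousOn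
    hdiff.differentiableOn fun z hz => ?_
  rw [interior_Ici] at hz
  have hpow : z ^ (α - 1) ≤ (z + y) ^ (α - 1) :=
    rpow_le_rpow hz.le (by linarith) (by linarith)
  rw [(hderiv z).deriv]
  nlinarith

lemma rpow_div_add_sub_rpow_div {k α y : ℝ} (hk : 0 < k) (hy : 0 ≤ y) :
    (y / k + y) ^ α - (y / k) ^ α = ((1 + k) ^ α - 1) / k ^ α * y ^ α := by
  rw [show y / k + y = y * ((1 + k) / k) by field_simp, mul_rpow hy (by positivity),
    div_rpow (by positivity) hk.le, div_rpow hy hk.le]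
  ring

lemma rpow_add_mul_rpow_le_add_rpow {k α x y : ℝ} (hk : 0 < k) (hα : 1 ≤ α) (hy : 0 ≤ y)
    (hyx : y ≤ k * x) : x ^ α + ((1 + k) ^ α - 1) / k ^ α * y ^ α ≤ (x + y) ^ α := by
  have hyk : 0 ≤ y / k := div_nonneg hy hk.le
  have hykx : y / k ≤ x := (div_le_iff₀ hk).mpr (by linarith)
  have hmono := monotoneOn_rpow_add_sub_rpow hα hy hyk (hyk.trans hykx) hykx
  simp only [rpow_div_add_sub_rpow_div hk hy] at hmono
  linarith

lemma one_add_rpow_sub_one_div_rpow_nonneg {k α : ℝ} (hk : 0 ≤ k) (hα : 0 ≤ α) :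
    0 ≤ ((1 + k) ^ α - 1) / k ^ α :=
  div_nonneg (sub_nonneg.mpr (one_le_rpow (by linarith) hα)) (rpow_nonneg hk α)

lemma sum_range_two_pow_weighted_rpow_le {k α : ℝ} (hk0 : 0 < k) (hk1 : k ≤ 1) (hα : 1 ≤ α)
    (m : ℕ) {a : ℕ → ℝ} (ha : ∀ j, 0 ≤ a j) (hdec : ∀ j, a (j + 1) ≤ k * a j) :
    ∑ j ∈ range (2 ^ m), (((1 + k) ^ α - 1) / k ^ α) ^ hammingWeight j * a j ^ α ≤
      (∑ j ∈ range (2 ^ m), a j) ^ α := by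
  set w := ((1 + k) ^ α - 1) / k ^ α
  induction m generalizing a with
  | zero => simp [hammingWeight]
  | succ m ih =>
    set x := ∑ j ∈ range (2 ^ m), a j
    set y := ∑ j ∈ range (2 ^ m), a (2 ^ m + j)
    have hanti : Antitone a :=
      antitone_nat_of_succ_le fun j => (hdec j).trans (mul_le_of_le_one_left (ha j) hk1)
    have hyx : y ≤ k * x := by
      rw [mul_sum]
      exact sum_le_sum fun j _ => (hanti (by have := Nat.one_le_two_pow (n := m); omega : j + 1 ≤ 2 ^ m + j)).trans (hdec j)
    have hupper : ∑ j ∈ range (2 ^ m), w ^ hammingWeight (2 ^ m + j) * a (2 ^ m + j) ^ α =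
        w * ∑ j ∈ range (2 ^ m), w ^ hammingWeight j * a (2 ^ m + j) ^ α := by
      rw [mul_sum]
      refine sum_congr rfl fun j hj => ?_
      rw [hammingWeight_two_pow_add (mem_range.mp hj), pow_succ]
      ring
    have ihupper := ih (a := fun j => a (2 ^ m + j)) (fun j => ha _)
      (fun j => by simpa only [← add_assoc] using hdec _)
    have hw : 0 ≤ w := one_add_rpow_sub_one_div_rpow_nonneg hk0.le (by linarith)
    rw [pow_succ, mul_two, sum_range_add, sum_range_add, hupper]
    calc _ ≤ x ^ α + w * y ^ α := add_le_add (ih ha hdec) (mul_le_mul_of_nonneg_left ihupper hw)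
      _ ≤ (x + y) ^ α := rpow_add_mul_rpow_le_add_rpow hk0 hα
          (sum_nonneg fun j _ => ha _) hyx

lemma sum_range_extend_by_zero {R M : Type*} [Zero R] [AddCommMonoid M] {N L : ℕ} (hNL : N ≤ L)
    (f : ℕ → R → M) (hf : ∀ j, f j 0 = 0) (a : ℕ → R) :
    ∑ j ∈ range L, f j (if j < N then a j else 0) = ∑ j ∈ range N, f j (a j) := by
  rw [← sum_range_add_sum_Ico _ hNL, sum_eq_zero (s := Ico N L) fun j hj => ?_, add_zero]
  · exact sum_congr rfl fun j hj => by rw [if_pos (mem_range.mp hj)]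
  · rw [if_neg (by simp at hj; omega), hf]

theorem stmt_9_general (k α : ℝ) (hk0 : 0 < k) (hk1 : k ≤ 1) (hα : 1 ≤ α)
    (N : ℕ) (a : ℕ → ℝ)
    (ha0 : ∀ j, j < N → 0 ≤ a j)
    (hdec : ∀ j, j + 1 < N → a (j + 1) ≤ k * a j) :
    (∑ j ∈ Finset.range N, a j) ^ α ≥
      ∑ j ∈ Finset.range N, (((1 + k) ^ α - 1) / k ^ α) ^ hammingWeight j * a j ^ α := by
  have hb0 (j : ℕ) : 0 ≤ if j < N then a j else 0 := by
    split_ifs with h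
    exacts [ha0 j h, le_rfl]
  have hbdec (j : ℕ) : (if j + 1 < N then a (j + 1) else 0) ≤ k * if j < N then a j else 0 := by
    split_ifs with h1 h2
    exacts [hdec j h1, by omega, mul_nonneg hk0.le (ha0 j ‹_›), by simp]
  have hN : N ≤ 2 ^ N := Nat.lt_two_pow_self.le
  have H := sum_range_two_pow_weighted_rpow_le hk0 hk1 hα N hb0 hbdec
  rwa [sum_range_extend_by_zero hN (fun _ x => x) (fun _ => rfl),
    sum_range_extend_by_zero hN (fun j x => (((1 + k) ^ α - 1) / k ^ α) ^ hammingWeight j * x ^ α)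
      (fun _ => by rw [zero_rpow (by linarith), mul_zero])] at H

theorem stmt_9 (k α : ℝ) (hk0 : 0 < k) (hk1 : k ≤ 1) (hα : 1 ≤ α)
    (N : ℕ) (hN : 1 ≤ N) (a : ℕ → ℝ)
    (ha0 : ∀ j, j < N → 0 ≤ a j)
    (hdec : ∀ j, j + 1 < N → a (j + 1) ≤ k * a j) :
    (∑ j ∈ Finset.range N, a j) ^ α ≥
      ∑ j ∈ Finset.range N, (((1 + k) ^ α - 1) / k ^ α) ^ hammingWeight j * a j ^ α :=
  stmt_9_general k α hk0 hk1 hα N a ha0 hdec
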